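/- arXiv:1508.00359 — 7 statements merged into one kernel-verified Lean document; each statement's English description precedes it below -/
import Mathlib

section
/- Let E : 1 → H → G →^π Q → 1 be an extension with outer action Φ, let α ∈ Aut(H) and β ∈ Aut(Q) satisfy Φ∘β = c_{[α]}∘Φ in Out(H). Then there exists an automorphism γ of G with γ|_H = α and π∘γ = β∘π if and only if the pushout extension α_*E is equivalent to the pullback extension β*E (both extensions of Q by H with outer action Φ∘β). -/
/-- The group of inner automorphisms is normal in the automorphism group. -/
instance OutNormal (H : Type*) [Group H] : ((MulAut.conj : H →* MulAut H).range).Normal := by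
  constructor
  intro n hn g
  obtain ⟨h, rfl⟩ := hn
  refine ⟨g h, ?_⟩
  ext x
  simp [MulAut.conj, mul_assoc]

/-- The outer automorphism group `Out H = Aut H / Inn H`. -/
def OutGroup (H : Type*) [Group H] :=
  MulAut H ⧸ (MulAut.conj : H →* MulAut H).range

instance (H : Type*) [Group H] : Group (OutGroup H) :=
  QuotientGroup.Quotient.group _

/-- The projection `Aut H → Out H`, `α ↦ [α]`. -/
def toOut (H : Type*) [Group H] : MulAut H →* OutGroup H :=
  QuotientGroup.mk' _

/-- The pullback (fiber product) of an extension `1 → ker π → G →^π Q → 1`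
along `β : Q' → Q`, as a subgroup of `G × Q'`. -/
def pullbackSubgroup {G Q Q' : Type*} [Group G] [Group Q] [Group Q']
    (π : G →* Q) (β : Q' →* Q) : Subgroup (G × Q') where
  carrier := {x | π x.1 = β x.2}
  one_mem' := by simp
  mul_mem' := by intro a b ha hb; simp_all
  inv_mem' := by intro a ha; simp_all

/-- let `E : 1 → H → G →^π Q → 1` (with `H = ker π`) have outer action
`Φ`, and let `α ∈ Aut H`, `β ∈ Aut Q` satisfy `Φ∘β = c_{[α]}∘Φ`.  Then there is an
automorphism `γ` of `G` with `γ|_H = α` and `π∘γ = β∘π` iff the pushout `α_* E` is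
equivalent to the pullback `β^* E`, the latter being expressed (via the universal
property of the pushout) as the existence of a morphism `E → β^* E` covering
`(α, id_Q)`. -/
theorem stmt7 {G Q : Type*} [Group G] [Group Q]
    (π : G →* Q) (hπ : Function.Surjective π)
    (Φ : Q →* OutGroup ↥π.ker)
    (hΦ : ∀ g : G, Φ (π g) = toOut ↥π.ker (MulAut.conjNormal g))
    (α : MulAut ↥π.ker) (β : MulAut Q)
    (hcomm : ∀ q : Q, Φ (β q) = toOut ↥π.ker α * Φ q * (toOut ↥π.ker α)⁻¹) :
    (∃ γ : MulAut G,
      (∀ h : ↥π.ker, γ ↑h = (↑(α h) : G)) ∧ ∀ g : G, π (γ g) = β (π g)) ↔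
    (∃ δ : G →* ↥(pullbackSubgroup π (β : Q →* Q)),
      (∀ h : ↥π.ker, ((δ ↑h : G × Q)) = ((↑(α h) : G), (1 : Q))) ∧
      ∀ g : G, ((δ g : G × Q)).2 = π g) := by
  constructor
  · rintro ⟨γ, hγ1, hγ2⟩
    refine ⟨{ toFun := fun g => ⟨(γ g, π g), by
                simp only [pullbackSubgroup, Subgroup.mem_mk, Set.mem_setOf_eq]
                exact hγ2 g⟩,
              map_one' := by ext <;> simp,
              map_mul' := by intro a b; ext <;> simp }, ?_, ?_⟩
    · intro h
      have hh : π (h : G) = 1 := h.2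
      simp [hγ1, hh]
    · intro g; rfl
  · rintro ⟨δ, hδ1, hδ2⟩
    set f : G →* G := (MonoidHom.fst G Q).comp
      ((pullbackSubgroup π (β : Q →* Q)).subtype.comp δ) with hfdef
    have hf1 : ∀ h : ↥π.ker, f ↑h = (↑(α h) : G) := fun h => by
      have := congrArg Prod.fst (hδ1 h)
      simpa [hfdef] using this
    have hf2 : ∀ g, π (f g) = β (π g) := fun g => by
      have hm := (δ g).2
      simp only [pullbackSubgroup, Subgroup.mem_mk, Set.mem_setOf_eq] at hm
      exact hm.trans (congrArg (⇑β) (hδ2 g))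
    have hinj : Function.Injective f := by
      intro a b hab
      have h1 : π a = π b := β.injective (by rw [← hf2, ← hf2, hab])
      have hk : a * b⁻¹ ∈ π.ker := by simp [π.mem_ker, h1]
      have h2 : f (a * b⁻¹) = 1 := by simp [map_mul, map_inv, hab]
      have h3 := hf1 ⟨a * b⁻¹, hk⟩
      rw [h2] at h3
      have h4 : α ⟨a * b⁻¹, hk⟩ = 1 := Subtype.ext h3.symm
      have h5 : (⟨a * b⁻¹, hk⟩ : ↥π.ker) = 1 := α.injective (by simp [h4])
      have h6 : a * b⁻¹ = 1 := congrArg Subtype.val h5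
      exact mul_inv_eq_one.mp h6
    have hsurj : Function.Surjective f := by
      intro g'
      obtain ⟨g, hg⟩ := hπ (β⁻¹ (π g'))
      have hpg : π (f g) = π g' := by
        rw [hf2, hg]; simp
      have hk : g' * (f g)⁻¹ ∈ π.ker := by simp [π.mem_ker, hpg]
      refine ⟨(↑(α⁻¹ ⟨g' * (f g)⁻¹, hk⟩) : G) * g, ?_⟩
      rw [map_mul, hf1]
      simp
    refine ⟨MulEquiv.ofBijective f ⟨hinj, hsurj⟩, fun h => hf1 h, fun g => hf2 g⟩
end

section
/- Let E : 1 → H → G →^π Q → 1 be an extension with outer action Φ, and let zH denote the center of H with the Q-module structure induced by Φ. Then the kernel of the restriction homomorphism Aut(G,H) → Aut(H) × Aut(Q), γ ↦ (γ|_H, induced map on Q), is isomorphic to the group Z¹(Q, zH) of 1-cocycles: each cocycle σ corresponds to the automorphism g ↦ σ(π(g))·g of G. -/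
section Aux

variable {G Q : Type*} [Group G] [Group Q] (π : G →* Q)
  (ρ : Q →* MulAut ↥(Subgroup.center ↥π.ker))

abbrev Cocy := {σ : Q → ↥(Subgroup.center ↥π.ker) //
        ∀ q q' : Q, σ (q * q') = σ q * ρ q (σ q')}

def zv (σ : Cocy π ρ) (q : Q) : G := ((σ.1 q : ↥π.ker) : G)

lemma pi_zv (σ : Cocy π ρ) (q : Q) : π (zv π ρ σ q) = 1 := (σ.1 q : ↥π.ker).2

lemma sigma_one (σ : Cocy π ρ) : zv π ρ σ 1 = 1 := by
  have h := σ.2 1 1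
  simp only [one_mul, map_one, MulAut.one_apply] at h
  have : σ.1 1 = 1 := by
    have := mul_right_cancel (a := σ.1 1) (b := σ.1 1) (c := 1) ?_
    · exact this
    · rw [one_mul]; exact h.symm
  simp [zv, this]

def cocycleAut (hρ : ∀ (g : G) (z : ↥(Subgroup.center ↥π.ker)),
      ((↑(ρ (π g) z) : ↥π.ker) : G) = g * ((↑z : ↥π.ker) : G) * g⁻¹)
    (σ : Cocy π ρ) : MulAut G where
  toFun g := zv π ρ σ (π g) * g
  invFun g := (zv π ρ σ (π g))⁻¹ * g
  left_inv g := by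
    simp [pi_zv, mul_assoc]
  right_inv g := by
    simp [pi_zv, mul_assoc]
  map_mul' g g' := by
    have hc : zv π ρ σ (π g * π g')
        = zv π ρ σ (π g) * (g * zv π ρ σ (π g') * g⁻¹) := by
      have := congrArg (fun z : ↥(Subgroup.center ↥π.ker) => ((z : ↥π.ker) : G))
        (σ.2 (π g) (π g'))
      simpa [zv, hρ g (σ.1 (π g'))] using this
    simp only [map_mul, hc]
    group

end Aux

/-- for an extension `1 → H → G →^π Q → 1` (`H = ker π`) with
`zH = Z(H)` carrying the conjugation `Q`-action `ρ` induced by the extension, the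
kernel of `Aut(G,H) → Aut H × Aut Q`, `γ ↦ (γ|_H, induced map)`, is isomorphic to
the group `Z¹(Q, zH)` of 1-cocycles, each cocycle `σ` corresponding to the
automorphism `g ↦ σ(π g)·g`. -/
theorem stmt12 {G Q : Type*} [Group G] [Group Q]
    (π : G →* Q) (hπ : Function.Surjective π)
    (ρ : Q →* MulAut ↥(Subgroup.center ↥π.ker))
    (hρ : ∀ (g : G) (z : ↥(Subgroup.center ↥π.ker)),
      ((↑(ρ (π g) z) : ↥π.ker) : G) = g * ((↑z : ↥π.ker) : G) * g⁻¹) :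
    ∃ Θ : {σ : Q → ↥(Subgroup.center ↥π.ker) //
        ∀ q q' : Q, σ (q * q') = σ q * ρ q (σ q')} → MulAut G,
      (∀ σ (g : G), Θ σ g = ((↑(σ.1 (π g)) : ↥π.ker) : G) * g) ∧
      Function.Injective Θ ∧
      (∀ γ : MulAut G,
        ((∀ h ∈ π.ker, γ h = h) ∧ (∀ g : G, π (γ g) = π g)) ↔ ∃ σ, Θ σ = γ) ∧
      (∀ σ σ' τ, (∀ q : Q, τ.1 q = σ.1 q * σ'.1 q) → Θ τ = Θ σ * Θ σ') := by
  refine ⟨cocycleAut π ρ hρ, fun σ g => rfl, ?_, ?_, ?_⟩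
  · -- injectivity
    intro σ σ' h
    apply Subtype.ext
    funext q
    obtain ⟨g, rfl⟩ := hπ q
    have h1 : zv π ρ σ (π g) * g = zv π ρ σ' (π g) * g :=
      congrArg (fun f : MulAut G => f g) h
    have h2 : zv π ρ σ (π g) = zv π ρ σ' (π g) := mul_right_cancel h1
    exact Subtype.ext (Subtype.ext h2)
  · -- characterization
    intro γ
    constructor
    · rintro ⟨hker, hind⟩
      -- define σ q = γ g * g⁻¹ for π g = q
      have key : ∀ g g' : G, π g = π g' → γ g * g⁻¹ = γ g' * g'⁻¹ := by
        intro g g' hgg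
        have hk : g⁻¹ * g' ∈ π.ker := by
          simp [MonoidHom.mem_ker, hgg]
        have := hker _ hk
        calc γ g * g⁻¹ = γ g * (g⁻¹ * g') * g'⁻¹ * (g * g⁻¹) := by group
          _ = γ g * γ (g⁻¹ * g') * g'⁻¹ := by rw [this]; group
          _ = γ g' * g'⁻¹ := by rw [← map_mul]; group
      have mem_ker : ∀ g : G, γ g * g⁻¹ ∈ π.ker := by
        intro g
        simp [MonoidHom.mem_ker, hind g]
      have mem_cent : ∀ g : G, (⟨γ g * g⁻¹, mem_ker g⟩ : ↥π.ker) ∈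
          Subgroup.center ↥π.ker := by
        intro g
        rw [Subgroup.mem_center_iff]
        intro k
        apply Subtype.ext
        have hk : (k : G) ∈ π.ker := k.2
        have hconj : g⁻¹ * (k : G) * g ∈ π.ker := by
          simp [MonoidHom.mem_ker, MonoidHom.mem_ker.1 hk]
        have h1 : γ (g⁻¹ * (k : G) * g) = g⁻¹ * (k : G) * g := hker _ hconj
        have h2 : γ (k : G) = (k : G) := hker _ hk
        show (k : G) * (γ g * g⁻¹) = (γ g * g⁻¹) * (k : G)
        have h3 : γ g * (g⁻¹ * (k:G) * g) = (k:G) * γ g := by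
          rw [← h1, ← map_mul]
          have h4 : g * (g⁻¹ * (k:G) * g) = (k:G) * g := by group
          rw [h4, map_mul, h2]
        calc (k:G) * (γ g * g⁻¹) = γ g * (g⁻¹ * (k:G) * g) * g⁻¹ := by
              rw [h3]; group
          _ = (γ g * g⁻¹) * (k:G) := by group
      classical
      choose rep hrep using hπ
      refine ⟨⟨fun q => ⟨⟨γ (rep q) * (rep q)⁻¹, mem_ker _⟩, mem_cent _⟩, ?_⟩, ?_⟩
      · intro q q'
        apply Subtype.ext; apply Subtype.ext
        show γ (rep (q*q')) * (rep (q*q'))⁻¹ = _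
        have hπr : π (rep q * rep q') = q * q' := by simp [hrep]
        rw [key (rep (q*q')) (rep q * rep q') (by rw [hrep, hπr])]
        have hrhs : ((↑(ρ q (⟨⟨γ (rep q') * (rep q')⁻¹, mem_ker _⟩, mem_cent _⟩ :
            ↥(Subgroup.center ↥π.ker))) : ↥π.ker) : G)
            = rep q * (γ (rep q') * (rep q')⁻¹) * (rep q)⁻¹ := by
          have h := hρ (rep q) (⟨⟨γ (rep q') * (rep q')⁻¹, mem_ker _⟩, mem_cent _⟩)
          rw [hrep q] at h
          exact h
        show γ (rep q * rep q') * (rep q * rep q')⁻¹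
            = (γ (rep q) * (rep q)⁻¹) * _
        rw [hrhs, map_mul]
        group
      · apply MulEquiv.ext
        intro g
        show zv π ρ _ (π g) * g = γ g
        show γ (rep (π g)) * (rep (π g))⁻¹ * g = γ g
        rw [key (rep (π g)) g (hrep _)]
        group
    · rintro ⟨σ, rfl⟩
      constructor
      · intro h hh
        show zv π ρ σ (π h) * h = h
        rw [MonoidHom.mem_ker.1 hh, sigma_one, one_mul]
      · intro g
        show π (zv π ρ σ (π g) * g) = π g
        simp [pi_zv]
  · -- multiplicativity
    intro σ σ' τ hτ
    apply MulEquiv.ext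
    intro g
    show zv π ρ τ (π g) * g = zv π ρ σ (π (zv π ρ σ' (π g) * g)) * (zv π ρ σ' (π g) * g)
    rw [map_mul, pi_zv, one_mul]
    have : zv π ρ τ (π g) = zv π ρ σ (π g) * zv π ρ σ' (π g) := by
      simp [zv, hτ (π g)]
    rw [this, mul_assoc]
end

section
/- Let E : 1 → H → G →^π Q → 1 be an extension with outer action Φ and S = {(α,β) ∈ Aut(H)×Aut(Q) : Φβ = c_{[α]}Φ}. Then the set B = {(c_g|_H, c_{π(g)}) : g ∈ G} is a normal subgroup of S, and the kernel of the map G → B, g ↦ (c_g|_H, c_{π(g)}), equals C_G(H) ∩ π⁻¹(Z(Q)); in particular B ≅ G / (C_G(H) ∩ π⁻¹(Z(Q))). -/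
/-- The homomorphism `u : G → Aut H × Aut Q`, `g ↦ (c_g|_H, c_{π g})`, for
`H = ker π`. -/
def resPair {G Q : Type*} [Group G] [Group Q] (π : G →* Q) :
    G →* MulAut ↥π.ker × MulAut Q :=
  (MulAut.conjNormal (H := π.ker)).prod ((MulAut.conj : Q →* MulAut Q).comp π)

/-- for an extension `1 → H → G →^π Q → 1` (`H = ker π`) with outer
action `Φ` and `S = {(α,β) : Φβ = c_{[α]}Φ}`, the set `B = {(c_g|_H, c_{π g})}`
(the range of `u = resPair π`) is a normal subgroup of `S`, and the kernel of `u`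
is `C_G(H) ∩ π⁻¹(Z(Q))`; in particular `B ≅ G/(C_G(H) ∩ π⁻¹(Z(Q)))`. -/
theorem stmt13 {G Q : Type*} [Group G] [Group Q]
    (π : G →* Q) (hπ : Function.Surjective π)
    (Φ : Q →* OutGroup ↥π.ker)
    (hΦ : ∀ g : G, Φ (π g) = toOut ↥π.ker (MulAut.conjNormal g))
    (S : Subgroup (MulAut ↥π.ker × MulAut Q))
    (hS : ∀ p : MulAut ↥π.ker × MulAut Q,
      p ∈ S ↔ ∀ q : Q, Φ (p.2 q) = toOut ↥π.ker p.1 * Φ q * (toOut ↥π.ker p.1)⁻¹) :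
    ((resPair π).range ≤ S) ∧
    (∀ s ∈ S, ∀ b ∈ (resPair π).range, s * b * s⁻¹ ∈ (resPair π).range) ∧
    ((resPair π).ker =
      Subgroup.centralizer (π.ker : Set G) ⊓ (Subgroup.center Q).comap π) ∧
    Nonempty ((G ⧸ (resPair π).ker) ≃* ↥(resPair π).range) := by
  refine ⟨?_, ?_, ?_, ?_⟩
  · rintro p ⟨g, rfl⟩
    rw [hS]
    intro q
    obtain ⟨x, rfl⟩ := hπ q
    have h1 : (resPair π g).2 (π x) = π (g * x * g⁻¹) := by
      simp [resPair, MulAut.conj]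
    rw [h1, hΦ, hΦ]
    have h2 : (MulAut.conjNormal (g * x * g⁻¹) : MulAut π.ker) =
        MulAut.conjNormal g * MulAut.conjNormal x * (MulAut.conjNormal g)⁻¹ := by
      simp [map_mul]
    rw [h2]
    simp [resPair, map_mul]
  · rintro s hs b ⟨g, rfl⟩
    obtain ⟨g', hg'⟩ := hπ (s.2 (π g))
    have key : Φ (s.2 (π g)) = toOut _ s.1 * Φ (π g) * (toOut _ s.1)⁻¹ :=
      (hS s).1 hs (π g)
    rw [← hg', hΦ, hΦ] at key
    have key2 : toOut ↥π.ker (MulAut.conjNormal g') =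
        toOut ↥π.ker (s.1 * MulAut.conjNormal g * s.1⁻¹) := by
      rw [map_mul, map_mul, key, map_inv]
    have key3 : (MulAut.conjNormal g' : MulAut ↥π.ker)⁻¹ *
        (s.1 * MulAut.conjNormal g * s.1⁻¹) ∈
        (MulAut.conj : ↥π.ker →* MulAut ↥π.ker).range :=
      QuotientGroup.eq.mp key2
    obtain ⟨h, hh⟩ := key3
    have hz : MulAut.conjNormal g' * MulAut.conj h = s.1 * MulAut.conjNormal g * s.1⁻¹ := by
      rw [hh]; group
    refine ⟨g' * h, ?_⟩
    have e1 : (resPair π (g' * ↑h)).1 = s.1 * MulAut.conjNormal g * s.1⁻¹ := by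
      have : (resPair π (g' * ↑h)).1 = MulAut.conjNormal g' * MulAut.conj h := by
        simp [resPair, map_mul, MulAut.conjNormal_val]
      rw [this, hz]
    have e2 : (resPair π (g' * ↑h)).2 = s.2 * (resPair π g).2 * s.2⁻¹ := by
      have hker : π (h : G) = 1 := h.2
      ext q
      simp [resPair, MulAut.conj, map_mul, hker, hg', mul_assoc]
    ext
    · rw [e1]; rfl
    · rw [e2]; rfl
  · ext x
    simp only [Subgroup.mem_inf, MonoidHom.mem_ker, Subgroup.mem_comap,
      Subgroup.mem_centralizer_iff, Subgroup.mem_center_iff]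
    constructor
    · intro h
      have h1 : (resPair π x).1 = 1 := by rw [h]; rfl
      have h2 : (resPair π x).2 = 1 := by rw [h]; rfl
      constructor
      · intro y hy
        have := congrArg Subtype.val (DFunLike.congr_fun h1 (⟨y, hy⟩ : ↥π.ker))
        simp only [resPair, MonoidHom.prod_apply, MulAut.one_apply] at this
        have hxy : x * y * x⁻¹ = y := by
          simpa using this
        calc y * x = (x * y * x⁻¹) * x := by rw [hxy]
          _ = x * y := by group
      · intro q
        have := DFunLike.congr_fun h2 q
        simp only [resPair, MonoidHom.prod_apply, MonoidHom.comp_apply,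
          MulAut.conj_apply, MulAut.one_apply] at this
        calc q * π x = (π x * q * (π x)⁻¹) * π x := by rw [this]
          _ = π x * q := by group
    · rintro ⟨hc, hz⟩
      have e1 : (resPair π x).1 = 1 := by
        ext y
        have hxy : y.1 * x = x * y.1 := hc y.1 y.2
        show ((MulAut.conjNormal x y : ↥π.ker) : G) = y
        have : ((MulAut.conjNormal x y : ↥π.ker) : G) = x * y.1 * x⁻¹ := rfl
        rw [this, ← hxy]
        group
      have e2 : (resPair π x).2 = 1 := by
        ext q
        show π x * q * (π x)⁻¹ = q
        rw [← hz q]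
        group
      have : resPair π x = 1 := Prod.ext e1 e2
      exact this
  · exact ⟨QuotientGroup.quotientKerEquivRange (resPair π)⟩
end

section
/- Let E : 1 → H → G →^π Q → 1 be an extension and let ḡ ∈ C_G(H) ∩ π⁻¹(Z(Q)). Then the map σ_ḡ(g) = [ḡ,g] = ḡ g ḡ⁻¹ g⁻¹ satisfies: (i) σ_ḡ(gh) = σ_ḡ(g) for all h ∈ H, hence induces a map σ_ḡ : Q → G; (ii) σ_ḡ(g) ∈ Z(H) for all g ∈ G; (iii) the induced map σ_ḡ : Q → Z(H) is a 1-cocycle (derivation) with respect to the conjugation action of Q on Z(H), i.e. σ_ḡ(qq') = σ_ḡ(q) · (q·σ_ḡ(q')). -/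
private lemma comm_inv {G : Type*} [Group G] {a b : G} (h : a * b = b * a) :
    a * b⁻¹ = b⁻¹ * a := by
  rw [mul_inv_eq_iff_eq_mul, mul_assoc, h, ← mul_assoc, inv_mul_cancel, one_mul]

/-- The commutator map `σ_ḡ(g) = [ḡ, g] = ḡ g ḡ⁻¹ g⁻¹`. -/
def commMap {G : Type*} [Group G] (gbar : G) : G → G :=
  fun g => gbar * g * gbar⁻¹ * g⁻¹

/-- for an extension `1 → H → G →^π Q → 1` (`H = ker π`) and
`ḡ ∈ C_G(H) ∩ π⁻¹(Z(Q))`, the map `σ_ḡ(g) = [ḡ,g]` is (i) invariant under right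
multiplication by `H` (hence induces a map on `Q`), (ii) takes values in `Z(H)`,
and (iii) is a 1-cocycle for the conjugation action of `Q` on `Z(H)`. -/
theorem stmt14 {G Q : Type*} [Group G] [Group Q]
    (π : G →* Q) (hπ : Function.Surjective π)
    (gbar : G) (h1 : gbar ∈ Subgroup.centralizer (π.ker : Set G))
    (h2 : π gbar ∈ Subgroup.center Q) :
    (∀ g : G, ∀ h ∈ π.ker, commMap gbar (g * h) = commMap gbar g) ∧
    (∀ g : G, commMap gbar g ∈ π.ker) ∧
    (∀ g : G, ∀ h ∈ π.ker, commMap gbar g * h = h * commMap gbar g) ∧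
    (∀ g g' : G, commMap gbar (g * g') = commMap gbar g * (g * commMap gbar g' * g⁻¹)) := by
  refine ⟨?_, ?_, ?_, ?_⟩
  · intro g h hh
    have e : h * gbar⁻¹ = gbar⁻¹ * h := comm_inv (h1 h hh)
    simp only [commMap]
    calc gbar * (g * h) * gbar⁻¹ * (g * h)⁻¹
        = gbar * g * (h * gbar⁻¹) * h⁻¹ * g⁻¹ := by group
      _ = gbar * g * (gbar⁻¹ * h) * h⁻¹ * g⁻¹ := by rw [e]
      _ = gbar * g * gbar⁻¹ * g⁻¹ := by group
  · intro g
    simp only [commMap, MonoidHom.mem_ker, map_mul, map_inv]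
    have hc : π g * π gbar = π gbar * π g := Subgroup.mem_center_iff.mp h2 (π g)
    rw [mul_assoc (π gbar), comm_inv hc]
    group
  · intro g h hh
    have hc1 : h * gbar = gbar * h := h1 h hh
    have hk : g⁻¹ * h * g ∈ π.ker := by
      simp only [MonoidHom.mem_ker, map_mul, map_inv] at hh ⊢
      simp [hh]
    have e2 : (g⁻¹ * h * g) * gbar⁻¹ = gbar⁻¹ * (g⁻¹ * h * g) :=
      comm_inv (h1 _ hk)
    simp only [commMap]
    calc gbar * g * gbar⁻¹ * g⁻¹ * h
        = gbar * (g * (gbar⁻¹ * (g⁻¹ * h * g)) * g⁻¹) := by group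
      _ = gbar * (g * ((g⁻¹ * h * g) * gbar⁻¹) * g⁻¹) := by rw [e2]
      _ = (gbar * h) * (g * gbar⁻¹ * g⁻¹) := by group
      _ = (h * gbar) * (g * gbar⁻¹ * g⁻¹) := by rw [← hc1]
      _ = h * (gbar * g * gbar⁻¹ * g⁻¹) := by group
  · intro g g'
    simp only [commMap]
    group
end

section
/- Let Φ : Q → Out(H) be a homomorphism with kernel N = ker Φ, and let K = {β ∈ Aut(Q) : Φ∘β = Φ and β|_N = id_N}. For β ∈ K define λ_β(q) = β(q)q⁻¹. Then: (i) λ_β takes values in the center of N; (ii) λ_β is constant on cosets of N and descends to a 1-cocycle Q → Z(N) for the conjugation action; (iii) the map β ↦ [λ_β] ∈ H¹(Q, Z(N)) is a group homomorphism whose kernel consists of conjugations c_w by elements w ∈ Z(N). Consequently K fits in an exact sequence Z(N) → K → H¹(Q, Z(N)), and if Z(N) and H¹(Q,Z(N)) are solvable groups then K is solvable. -/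
/-- let `Φ : Q → Out H` with kernel `N`, and let
`K = {β ∈ Aut Q : Φ∘β = Φ, β|_N = id}`.  With `λ_β(q) = β(q)q⁻¹`:
(i) `λ_β` takes values in the center of `N`;
(ii) `λ_β` is constant on cosets of `N` and descends to a 1-cocycle for the
conjugation action of `Q` on `Z(N)`;
(iii) `β ↦ [λ_β] ∈ H¹(Q, Z(N))` is a group homomorphism (at the cocycle level,
`λ_{ββ'} = λ_{β'}·λ_β` pointwise), whose kernel consists of the conjugations `c_w`
with `w ∈ Z(N)` (i.e. `λ_β` is a coboundary iff `β = c_w` for some `w ∈ Z(N)`).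
Consequently `K` fits in an exact sequence `Z(N) → K → H¹(Q,Z(N))` and, both ends
being abelian hence solvable, `K` is solvable. -/
theorem stmt16 {H Q : Type*} [Group H] [Group Q]
    (Φ : Q →* OutGroup H)
    (K : Subgroup (MulAut Q))
    (hK : ∀ β : MulAut Q,
      β ∈ K ↔ (∀ q : Q, Φ (β q) = Φ q) ∧ ∀ n ∈ Φ.ker, β n = n) :
    (∀ β ∈ K, ∀ q : Q, β q * q⁻¹ ∈ Φ.ker ∧
      ∀ n ∈ Φ.ker, (β q * q⁻¹) * n = n * (β q * q⁻¹)) ∧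
    (∀ β ∈ K, ∀ q : Q, ∀ n ∈ Φ.ker, β (q * n) * (q * n)⁻¹ = β q * q⁻¹) ∧
    (∀ β ∈ K, ∀ q q' : Q,
      β (q * q') * (q * q')⁻¹ = (β q * q⁻¹) * (q * (β q' * q'⁻¹) * q⁻¹)) ∧
    (∀ β ∈ K, ∀ β' ∈ K, ∀ q : Q,
      (β * β') q * q⁻¹ = (β' q * q⁻¹) * (β q * q⁻¹)) ∧
    (∀ β ∈ K,
      ((∃ w, w ∈ Φ.ker ∧ (∀ n ∈ Φ.ker, w * n = n * w) ∧
          ∀ q : Q, β q * q⁻¹ = w * (q * w⁻¹ * q⁻¹)) ↔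
        (∃ w, w ∈ Φ.ker ∧ (∀ n ∈ Φ.ker, w * n = n * w) ∧
          ∀ q : Q, β q = w * q * w⁻¹))) ∧
    IsSolvable ↥K := by

  have hker : ∀ β ∈ K, ∀ q : Q, β q * q⁻¹ ∈ Φ.ker := by
    intro β hβ q
    have h := ((hK β).mp hβ).1 q
    simp [MonoidHom.mem_ker, h]
  have hcent : ∀ β ∈ K, ∀ q : Q, ∀ n ∈ Φ.ker,
      (β q * q⁻¹) * n = n * (β q * q⁻¹) := by
    intro β hβ q n hn
    obtain ⟨h1, h2⟩ := (hK β).mp hβ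
    have hn' : q⁻¹ * n * q ∈ Φ.ker := by
      simpa using (MonoidHom.normal_ker Φ).conj_mem n hn q⁻¹
    have hn'' : q * (q⁻¹ * n * q) * q⁻¹ ∈ Φ.ker := by
      simpa using (MonoidHom.normal_ker Φ).conj_mem _ hn' q
    have e1 : β (q * (q⁻¹ * n * q) * q⁻¹) = q * (q⁻¹ * n * q) * q⁻¹ := h2 _ hn''
    have e2 : β (q * (q⁻¹ * n * q) * q⁻¹) = β q * (q⁻¹ * n * q) * (β q)⁻¹ := by
      rw [map_mul, map_mul, h2 _ hn', map_inv]
    have e3 : β q * (q⁻¹ * n * q) * (β q)⁻¹ = n := by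
      rw [← e2, e1]; group
    have e4 : β q * (q⁻¹ * n * q) = n * β q := by
      rwa [mul_inv_eq_iff_eq_mul] at e3
    calc (β q * q⁻¹) * n = (β q * (q⁻¹ * n * q)) * q⁻¹ := by group
      _ = (n * β q) * q⁻¹ := by rw [e4]
      _ = n * (β q * q⁻¹) := by group
  have hcoset : ∀ β ∈ K, ∀ q : Q, ∀ n ∈ Φ.ker,
      β (q * n) * (q * n)⁻¹ = β q * q⁻¹ := by
    intro β hβ q n hn
    obtain ⟨h1, h2⟩ := (hK β).mp hβ
    rw [map_mul, h2 n hn, mul_inv_rev]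
    group
  have hmul : ∀ β ∈ K, ∀ β' ∈ K, ∀ q : Q,
      (β * β') q * q⁻¹ = (β' q * q⁻¹) * (β q * q⁻¹) := by
    intro β hβ β' hβ' q
    obtain ⟨h1, h2⟩ := (hK β).mp hβ
    set w := β' q * q⁻¹ with hw
    have hwk : w ∈ Φ.ker := hker β' hβ' q
    have hm : q⁻¹ * w * q ∈ Φ.ker := by
      simpa using (MonoidHom.normal_ker Φ).conj_mem w hwk q⁻¹
    have e2 : β' q = q * (q⁻¹ * w * q) := by rw [hw]; group
    have e3 : (β * β') q = β q * (q⁻¹ * w * q) := by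
      show β (β' q) = _
      rw [e2, map_mul, h2 _ hm]
    calc (β * β') q * q⁻¹ = (β q * q⁻¹) * w := by rw [e3]; group
      _ = w * (β q * q⁻¹) := hcent β hβ q w hwk
  refine ⟨fun β hβ q => ⟨hker β hβ q, hcent β hβ q⟩, hcoset, ?_, hmul, ?_, ?_⟩
  · intro β hβ q q'
    rw [map_mul, mul_inv_rev]
    group
  · intro β hβ
    constructor
    · rintro ⟨w, hw1, hw2, hw3⟩
      refine ⟨w, hw1, hw2, fun q => ?_⟩
      have h := hw3 q
      rw [mul_inv_eq_iff_eq_mul] at h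
      rw [h]; group
    · rintro ⟨w, hw1, hw2, hw3⟩
      refine ⟨w, hw1, hw2, fun q => ?_⟩
      rw [hw3 q]; group
  · refine isSolvable_of_comm ?_
    intro a b
    apply Subtype.ext
    show (a : MulAut Q) * b = (b : MulAut Q) * a
    ext q
    have e1 := hmul (a : MulAut Q) a.2 (b : MulAut Q) b.2 q
    have e2 := hmul (b : MulAut Q) b.2 (a : MulAut Q) a.2 q
    have e3 : ((b : MulAut Q) q * q⁻¹) * ((a : MulAut Q) q * q⁻¹)
        = ((a : MulAut Q) q * q⁻¹) * ((b : MulAut Q) q * q⁻¹) :=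
      hcent (b : MulAut Q) b.2 q _ (hker (a : MulAut Q) a.2 q)
    have e4 : ((a : MulAut Q) * b) q * q⁻¹ = ((b : MulAut Q) * a) q * q⁻¹ := by
      rw [e1, e2, e3]
    exact mul_right_cancel e4
end

section
/- Let 1 → H → G → Q → 1 be an extension of groups with outer action Φ : Q → Out(H), and suppose: (1) H is solvable; (2) H is a characteristic subgroup of G; (3) the normalizer N_{Out(H)}(Φ(Q)) of Φ(Q) in Out(H) is solvable; (4) Aut(ker Φ) is solvable. Then Aut(G) is solvable. -/
/-!
Write `H = ker π`, let `ᾱ ∈ Aut Q` be induced by `α ∈ Aut G`, and `[α|_H] ∈ Out H` the class of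
the restriction. Since `Φ (ᾱ q) = [α|_H] Φ(q) [α|_H]⁻¹`, the class `[α|_H]` normalizes `Φ(Q)` and
`ᾱ` preserves `ker Φ`, so `α ↦ ([α|_H], ᾱ|_{ker Φ})` is a homomorphism
`Ψ : Aut G → N_{Out H}(Φ(Q)) × Aut(ker Φ)` with solvable target. For `α ∈ ker Ψ`, `α|_H` is inner
and `ᾱ` acts trivially on `ker Φ` and on `Q / ker Φ`; if moreover `α|_H = 1` and `ᾱ = 1`, then `α`
acts trivially on `H` and on `G / H`. Automorphisms acting trivially on a normal subgroup and on
the quotient by it commute, and `Inn H` is a quotient of `H`, so `ker Ψ`, hence `Aut G`, is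
solvable.
-/

instance MonoidHom.isSolvable_range {X Y : Type*} [Group X] [Group Y] (f : X →* Y)
    [Group.IsSolvable X] : Group.IsSolvable f.range :=
  Group.isSolvable_of_surjective f.rangeRestrict_surjective

instance Subgroup.isSolvable_prod {X Y : Type*} [Group X] [Group Y] (S : Subgroup X)
    (T : Subgroup Y) [Group.IsSolvable S] [Group.IsSolvable T] : Group.IsSolvable (S.prod T) :=
  Group.isSolvable_of_isSolvable_injective (f := (S.prodEquiv T).toMonoidHom)
    (S.prodEquiv T).injective

theorem Subgroup.isSolvable_comap {X Y : Type*} [Group X] [Group Y] (f : X →* Y)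
    (T : Subgroup Y) [Group.IsSolvable T] [Group.IsSolvable f.ker] :
    Group.IsSolvable (T.comap f) := by
  have hker : f.ker ≤ T.comap f := fun x hx => by simp [f.mem_ker.mp hx, T.one_mem]
  refine Group.isSolvable_of_ker_le_range (Subgroup.inclusion hker) (f.subgroupComap T)
    fun x hx => ?_
  exact ⟨⟨x, congrArg Subtype.val hx⟩, rfl⟩

theorem QuotientGroup.quotientKerEquivOfSurjective_symm_apply {G Q : Type*} [Group G] [Group Q]
    {π : G →* Q} (hπ : Function.Surjective π) (g : G) :
    (QuotientGroup.quotientKerEquivOfSurjective π hπ).symm (π g) = g := by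
  rw [MulEquiv.symm_apply_eq]
  rfl

namespace MulAut

variable {G Q : Type*} [Group G] [Group Q]

def stabilityGroup (K : Subgroup G) : Subgroup (MulAut G) where
  carrier := {β | (∀ k ∈ K, β k = k) ∧ ∀ g, g⁻¹ * β g ∈ K}
  one_mem' := ⟨fun _ _ => rfl, fun g => by simp [K.one_mem]⟩
  mul_mem' := by
    rintro α β ⟨hαK, hα⟩ ⟨hβK, hβ⟩
    refine ⟨fun k hk => by simp [hβK k hk, hαK k hk], fun g => ?_⟩
    simpa [mul_assoc] using K.mul_mem (hβ g) (hα (β g))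
  inv_mem' := by
    rintro β ⟨hβK, hβ⟩
    refine ⟨fun k hk => β.symm_apply_eq.2 (hβK k hk).symm, fun g => ?_⟩
    simpa using K.inv_mem (hβ (β⁻¹ g))

section StabilityGroup

variable {K : Subgroup G} [K.Normal]

theorem inv_mul_apply_mem_centralizer {β : MulAut G} (hβ : β ∈ stabilityGroup K) (g : G) :
    g⁻¹ * β g ∈ Subgroup.centralizer K := by
  intro k hk
  have hconj : β g * k * (β g)⁻¹ = g * k * g⁻¹ := by
    simpa [hβ.1 k hk] using hβ.1 _ (‹K.Normal›.conj_mem k hk g)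
  have hcomm : β g * k = g * k * (g⁻¹ * β g) := by
    rw [← mul_assoc, ← hconj]; group
  rw [mul_assoc g⁻¹, hcomm]
  group

theorem mul_comm_of_mem_stabilityGroup {β γ : MulAut G}
    (hβ : β ∈ stabilityGroup K) (hγ : γ ∈ stabilityGroup K) : β * γ = γ * β := by
  ext g
  obtain ⟨b, hb, hβg⟩ : ∃ b ∈ K, β g = g * b := ⟨_, hβ.2 g, by group⟩
  obtain ⟨c, hc, hγg⟩ : ∃ c ∈ K, γ g = g * c := ⟨_, hγ.2 g, by group⟩
  have hbc : c * b = b * c := by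
    simpa [hβg] using inv_mul_apply_mem_centralizer hβ g c hc
  simp [hβg, hγg, hβ.1 c hc, hγ.1 b hb, mul_assoc, hbc]

instance : Group.IsSolvable (stabilityGroup K) :=
  Group.isSolvable_of_comm fun β γ => Subtype.ext (mul_comm_of_mem_stabilityGroup β.2 γ.2)

end StabilityGroup

def restrictOfMapEq {A : Type*} [Group A] (f : A →* MulAut Q) (K : Subgroup Q)
    (hf : ∀ a, K.map (f a).toMonoidHom = K) : A →* MulAut K where
  toFun a := ((f a).subgroupMap K).trans (MulEquiv.subgroupCongr (hf a))
  map_one' := by ext k; exact congrArg (· k) (map_one f)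
  map_mul' a b := by ext k; exact congrArg (· k) (map_mul f a b)

theorem characteristic_mul_conjNormal_mul_inv (H : Subgroup G) [H.Characteristic]
    (α : MulAut G) (g : G) :
    characteristic H α * conjNormal g * (characteristic H α)⁻¹ = conjNormal (α g) := by
  ext h
  simp

section InducedOfSurjective

variable {π : G →* Q} (hπ : Function.Surjective π) [π.ker.Characteristic]

noncomputable def inducedOfSurjective : MulAut G →* MulAut Q where
  toFun α := MulAut.congr (QuotientGroup.quotientKerEquivOfSurjective π hπ)
    (QuotientGroup.congr π.ker π.ker α (Subgroup.characteristic_iff_map_eq.mp ‹_› α))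
  map_one' := by
    ext q
    obtain ⟨g, rfl⟩ := hπ q
    simp [QuotientGroup.quotientKerEquivOfSurjective_symm_apply]
    rfl
  map_mul' α β := by
    ext q
    obtain ⟨g, rfl⟩ := hπ q
    simp [QuotientGroup.quotientKerEquivOfSurjective_symm_apply]
    rfl

theorem inducedOfSurjective_apply_map (α : MulAut G) (g : G) :
    inducedOfSurjective hπ α (π g) = π (α g) := by
  simp [inducedOfSurjective, QuotientGroup.quotientKerEquivOfSurjective_symm_apply]
  rfl

theorem ker_prod_inducedOfSurjective_le_stabilityGroup :
    ((characteristic π.ker).prod (inducedOfSurjective hπ)).ker ≤ stabilityGroup π.ker := by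
  intro α hα
  obtain ⟨hαH, hαQ⟩ := Prod.ext_iff.mp hα
  refine ⟨fun k hk => congrArg (fun β : MulAut π.ker => (β ⟨k, hk⟩ : G)) hαH, fun g => ?_⟩
  have hαg : π (α g) = π g := by
    rw [← inducedOfSurjective_apply_map hπ]
    exact congrArg (· (π g)) hαQ
  simp [hαg]

end InducedOfSurjective

end MulAut

section OuterAction

open MulAut

variable {G Q : Type*} [Group G] [Group Q] {π : G →* Q} [π.ker.Characteristic]
  {Φ : Q →* OutGroup π.ker}

theorem map_inducedOfSurjective_apply (hπ : Function.Surjective π)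
    (hΦ : ∀ g : G, Φ (π g) = toOut π.ker (conjNormal g)) (α : MulAut G) (q : Q) :
    Φ (inducedOfSurjective hπ α q) =
      toOut π.ker (characteristic π.ker α) * Φ q * (toOut π.ker (characteristic π.ker α))⁻¹ := by
  obtain ⟨g, rfl⟩ := hπ q
  rw [inducedOfSurjective_apply_map, hΦ, hΦ, ← characteristic_mul_conjNormal_mul_inv, map_mul,
    map_mul, map_inv]

theorem toOut_characteristic_mem_normalizer (hπ : Function.Surjective π)
    (hΦ : ∀ g : G, Φ (π g) = toOut π.ker (conjNormal g)) (α : MulAut G) :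
    toOut π.ker (characteristic π.ker α) ∈
      Subgroup.normalizer (Φ.range : Set (OutGroup π.ker)) := by
  refine Subgroup.mem_normalizer_iff.mpr fun y => ⟨?_, ?_⟩
  · rintro ⟨q, rfl⟩
    exact ⟨inducedOfSurjective hπ α q, map_inducedOfSurjective_apply hπ hΦ α q⟩
  · rintro ⟨q, hq⟩
    refine ⟨inducedOfSurjective hπ α⁻¹ q, ?_⟩
    rw [map_inducedOfSurjective_apply hπ hΦ, hq, map_inv, map_inv]
    group

theorem ker_map_inducedOfSurjective (hπ : Function.Surjective π)
    (hΦ : ∀ g : G, Φ (π g) = toOut π.ker (conjNormal g)) (α : MulAut G) :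
    Φ.ker.map (inducedOfSurjective hπ α).toMonoidHom = Φ.ker := by
  ext q
  rw [Subgroup.mem_map_equiv, MonoidHom.mem_ker, MonoidHom.mem_ker]
  change Φ ((inducedOfSurjective hπ α)⁻¹ q) = 1 ↔ Φ q = 1
  rw [← map_inv, map_inducedOfSurjective_apply hπ hΦ, conj_eq_one_iff]

noncomputable def toNormalizerProdMulAutKer (hπ : Function.Surjective π)
    (hΦ : ∀ g : G, Φ (π g) = toOut π.ker (conjNormal g)) :
    MulAut G →* Subgroup.normalizer (Φ.range : Set (OutGroup π.ker)) × MulAut Φ.ker :=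
  (((toOut π.ker).comp (characteristic π.ker)).codRestrict _
      (toOut_characteristic_mem_normalizer hπ hΦ)).prod
    (restrictOfMapEq (inducedOfSurjective hπ) Φ.ker (ker_map_inducedOfSurjective hπ hΦ))

theorem ker_toNormalizerProdMulAutKer_le (hπ : Function.Surjective π)
    (hΦ : ∀ g : G, Φ (π g) = toOut π.ker (conjNormal g)) :
    (toNormalizerProdMulAutKer hπ hΦ).ker ≤
      ((conj : π.ker →* MulAut π.ker).range.prod (stabilityGroup Φ.ker)).comap
        ((characteristic π.ker).prod (inducedOfSurjective hπ)) := by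
  intro α hα
  obtain ⟨hαOut, hαKer⟩ := Prod.ext_iff.mp hα
  have hinner : toOut π.ker (characteristic π.ker α) = 1 := congrArg Subtype.val hαOut
  refine ⟨(QuotientGroup.eq_one_iff _).mp hinner, fun k hk => ?_, fun q => ?_⟩
  · exact congrArg (fun β : MulAut Φ.ker => (β ⟨k, hk⟩ : Q)) hαKer
  · simp [map_inducedOfSurjective_apply hπ hΦ, hinner]

end OuterAction

/-- let `1 → H → G →^π Q → 1` (`H = ker π`) have outer action `Φ` and
suppose (1) `H` is solvable, (2) `H` is characteristic in `G`, (3) the normalizer of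
`Φ(Q)` in `Out H` is solvable, and (4) `Aut(ker Φ)` is solvable.  Then `Aut G` is
solvable. -/
theorem stmt17 {G Q : Type*} [Group G] [Group Q]
    (π : G →* Q) (hπ : Function.Surjective π)
    (Φ : Q →* OutGroup ↥π.ker)
    (hΦ : ∀ g : G, Φ (π g) = toOut ↥π.ker (MulAut.conjNormal g))
    (h1 : IsSolvable ↥π.ker)
    (h2 : π.ker.Characteristic)
    (h3 : IsSolvable ↥(Subgroup.normalizer (Φ.range : Set (OutGroup ↥π.ker))))
    (h4 : IsSolvable (MulAut ↥Φ.ker)) :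
    IsSolvable (MulAut G) := by
  have : Group.IsSolvable π.ker := h1
  have : Group.IsSolvable (Subgroup.normalizer (Φ.range : Set (OutGroup π.ker))) := h3
  have : Group.IsSolvable (MulAut Φ.ker) := h4
  have := h2
  let ρ := (MulAut.characteristic π.ker).prod (MulAut.inducedOfSurjective hπ)
  have : Group.IsSolvable ρ.ker := Group.isSolvable_of_isSolvable_injective
    (Subgroup.inclusion_injective (MulAut.ker_prod_inducedOfSurjective_le_stabilityGroup hπ))
  let S := ((MulAut.conj : π.ker →* MulAut π.ker).range.prod (MulAut.stabilityGroup Φ.ker)).comap ρ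
  have : Group.IsSolvable S := Subgroup.isSolvable_comap _ _
  exact Group.isSolvable_of_ker_le_range S.subtype (toNormalizerProdMulAutKer hπ hΦ)
    (by rw [Subgroup.range_subtype]; exact ker_toNormalizerProdMulAutKer_le hπ hΦ)
end

section
/- Let Φ : Q → Out(H) and S = {(α,β) ∈ Aut(H)×Aut(Q) : Φβ = c_{[α]}Φ}. If H, Aut_Φ(Q) = {β : Φβ = Φ}, and N_{Out(H)}(Φ(Q)) are all solvable, then S is solvable. Conversely, if S is solvable then H, Aut_Φ(Q), and the centralizer C_{Out(H)}(Φ(Q)) are solvable. -/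
/-!
The map `S → N_{Out H}(Φ Q)`, `(α, β) ↦ [α]`, has kernel the pairs `(c_h, β)` with `Φ β = Φ`,
which is the image of `H × Aut_Φ Q`; this gives the first implication. Conversely, `Aut_Φ Q` is
`{β | (1, β) ∈ S}`, while `{α | (α, 1) ∈ S}` contains `Inn H ≅ H / Z(H)` and is the full preimage
of `C_{Out H}(Φ Q)` in `Aut H`.
-/

open Subgroup

theorem Group.isSolvable_of_ker_le_center {G G' : Type*} [Group G] [Group G']
    [Group.IsSolvable G'] (f : G →* G') (hf : f.ker ≤ center G) : Group.IsSolvable G :=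
  have : Group.IsSolvable (center G) :=
    Group.isSolvable_of_comm fun a b => Subtype.ext (mem_center_iff.mp b.2 a)
  Group.isSolvable_of_ker_le_range (center G).subtype f (by simpa using hf)

theorem MulAut.ker_conj_le_center (G : Type*) [Group G] :
    (MulAut.conj : G →* MulAut G).ker ≤ center G := by
  refine fun g hg => mem_center_iff.mpr fun x => ?_
  have hgx : g * x * g⁻¹ = x := DFunLike.congr_fun (MonoidHom.mem_ker.mp hg) x
  exact (mul_inv_eq_iff_eq_mul.mp hgx).symm

theorem Subgroup.isSolvable_comap_of_injective {G G' : Type*} [Group G] [Group G'] {f : G →* G'}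
    (hf : Function.Injective f) (K : Subgroup G') [Group.IsSolvable K] :
    Group.IsSolvable (K.comap f) :=
  Group.isSolvable_of_isSolvable_injective (f := f.subgroupComap K) fun _ _ hab =>
    Subtype.ext (hf (congrArg Subtype.val hab))

theorem Subgroup.isSolvable_of_comap_surjective {G G' : Type*} [Group G] [Group G'] {f : G →* G'}
    (hf : Function.Surjective f) (K : Subgroup G') [Group.IsSolvable (K.comap f)] :
    Group.IsSolvable K :=
  Group.isSolvable_of_surjective (f.subgroupComap_surjective_of_surjective K hf)

theorem toOut_eq_one_iff {H : Type*} [Group H] {α : MulAut H} :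
    toOut H α = 1 ↔ α ∈ (MulAut.conj : H →* MulAut H).range :=
  QuotientGroup.eq_one_iff α

theorem toOut_conj {H : Type*} [Group H] (h : H) : toOut H (MulAut.conj h) = 1 :=
  toOut_eq_one_iff.mpr ⟨h, rfl⟩

theorem toOut_surjective (H : Type*) [Group H] : Function.Surjective (toOut H) :=
  QuotientGroup.mk'_surjective _

def IsCompatiblePairs {H Q : Type*} [Group H] [Group Q] (Φ : Q →* OutGroup H)
    (S : Subgroup (MulAut H × MulAut Q)) : Prop :=
  ∀ p : MulAut H × MulAut Q, p ∈ S ↔ ∀ q : Q, Φ (p.2 q) = toOut H p.1 * Φ q * (toOut H p.1)⁻¹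

namespace IsCompatiblePairs

variable {H Q : Type*} [Group H] [Group Q] {Φ : Q →* OutGroup H}
  {S : Subgroup (MulAut H × MulAut Q)}

theorem toOut_mem_normalizer (hS : IsCompatiblePairs Φ S) {p : MulAut H × MulAut Q}
    (hp : p ∈ S) : toOut H p.1 ∈ normalizer (Φ.range : Set (OutGroup H)) := by
  have hΦ := (hS p).mp hp
  refine mem_normalizer_iff.mpr fun x => ⟨?_, ?_⟩
  · rintro ⟨q, rfl⟩
    exact ⟨p.2 q, hΦ q⟩
  · rintro ⟨q, hq⟩
    refine ⟨p.2⁻¹ q, ?_⟩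
    have := hΦ (p.2⁻¹ q)
    rw [MulAut.apply_inv_self, hq] at this
    simpa using this.symm

theorem conj_mem (hS : IsCompatiblePairs Φ S) (h : H) {β : MulAut Q}
    (hβ : ∀ q, Φ (β q) = Φ q) : (MulAut.conj h, β) ∈ S :=
  (hS _).mpr fun q => by simp [toOut_conj, hβ]

theorem comap_inr_eq (hS : IsCompatiblePairs Φ S) {A : Subgroup (MulAut Q)}
    (hA : ∀ β : MulAut Q, β ∈ A ↔ ∀ q : Q, Φ (β q) = Φ q) :
    S.comap (MonoidHom.inr _ _) = A := by
  ext β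
  simp [hS _, hA]

theorem comap_inl_eq (hS : IsCompatiblePairs Φ S) :
    S.comap (MonoidHom.inl _ _) = (centralizer (Φ.range : Set (OutGroup H))).comap (toOut H) := by
  ext α
  simp only [mem_comap, hS _, MonoidHom.inl_apply, MulAut.one_apply, mem_centralizer_iff,
    MonoidHom.coe_range, Set.forall_mem_range]
  exact forall_congr' fun q => eq_mul_inv_iff_mul_eq

theorem isSolvable_of_isSolvable_normalizer (hS : IsCompatiblePairs Φ S)
    {A : Subgroup (MulAut Q)} (hA : ∀ β : MulAut Q, β ∈ A ↔ ∀ q : Q, Φ (β q) = Φ q)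
    [Group.IsSolvable H] [Group.IsSolvable A]
    [Group.IsSolvable (normalizer (Φ.range : Set (OutGroup H)))] : Group.IsSolvable S := by
  let f : H × A →* S := (MulAut.conj.prodMap A.subtype).codRestrict S fun p =>
    hS.conj_mem p.1 ((hA _).mp p.2.2)
  let g : S →* normalizer (Φ.range : Set (OutGroup H)) :=
    ((toOut H).comp ((MonoidHom.fst _ _).comp S.subtype)).codRestrict _ fun p =>
      hS.toOut_mem_normalizer p.2
  refine Group.isSolvable_of_ker_le_range f g ?_
  rintro ⟨⟨α, β⟩, hp⟩ hk
  obtain ⟨h, rfl⟩ := toOut_eq_one_iff.mp (congrArg Subtype.val hk)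
  have hβ : β ∈ A := (hA β).mpr fun q => by simpa [toOut_conj] using (hS _).mp hp q
  exact ⟨(h, ⟨β, hβ⟩), rfl⟩

theorem isSolvable_left (hS : IsCompatiblePairs Φ S) [Group.IsSolvable S] :
    Group.IsSolvable H := by
  have := isSolvable_comap_of_injective (f := MonoidHom.inl _ _) (Prod.mk_left_injective 1) S
  let conj : H →* S.comap (MonoidHom.inl (MulAut H) (MulAut Q)) :=
    MulAut.conj.codRestrict _ fun h =>
      hS.conj_mem h fun q => congrArg Φ (MulAut.one_apply (M := Q) q)
  exact Group.isSolvable_of_ker_le_center conj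
    ((MonoidHom.ker_codRestrict _ _ _).trans_le (MulAut.ker_conj_le_center H))

theorem isSolvable_stabilizer (hS : IsCompatiblePairs Φ S) {A : Subgroup (MulAut Q)}
    (hA : ∀ β : MulAut Q, β ∈ A ↔ ∀ q : Q, Φ (β q) = Φ q) [Group.IsSolvable S] :
    Group.IsSolvable A := by
  have := isSolvable_comap_of_injective (f := MonoidHom.inr _ _) (Prod.mk_right_injective 1) S
  rwa [hS.comap_inr_eq hA] at this

theorem isSolvable_centralizer (hS : IsCompatiblePairs Φ S) [Group.IsSolvable S] :
    Group.IsSolvable (centralizer (Φ.range : Set (OutGroup H))) := by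
  have := isSolvable_comap_of_injective (f := MonoidHom.inl _ _) (Prod.mk_left_injective 1) S
  rw [hS.comap_inl_eq] at this
  exact isSolvable_of_comap_surjective (toOut_surjective H) _

end IsCompatiblePairs

/-- let `Φ : Q → Out H` and
`S = {(α,β) ∈ Aut H × Aut Q : Φβ = c_{[α]}Φ}`.  If `H`, `Aut_Φ Q = {β : Φβ = Φ}`
and `N_{Out H}(Φ(Q))` are solvable then `S` is solvable; conversely, if `S` is
solvable then `H`, `Aut_Φ Q` and `C_{Out H}(Φ(Q))` are solvable. -/
theorem stmt18 {H Q : Type*} [Group H] [Group Q]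
    (Φ : Q →* OutGroup H)
    (S : Subgroup (MulAut H × MulAut Q))
    (hS : ∀ p : MulAut H × MulAut Q,
      p ∈ S ↔ ∀ q : Q, Φ (p.2 q) = toOut H p.1 * Φ q * (toOut H p.1)⁻¹)
    (AΦ : Subgroup (MulAut Q))
    (hA : ∀ β : MulAut Q, β ∈ AΦ ↔ ∀ q : Q, Φ (β q) = Φ q) :
    (IsSolvable H → IsSolvable ↥AΦ → IsSolvable ↥(Subgroup.normalizer (Φ.range : Set (OutGroup H))) →
      IsSolvable ↥S) ∧
    (IsSolvable ↥S →
      IsSolvable H ∧ IsSolvable ↥AΦ ∧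
        IsSolvable ↥(Subgroup.centralizer (Φ.range : Set (OutGroup H)))) := by
  have hS : IsCompatiblePairs Φ S := hS
  refine ⟨fun hH hAΦ hN => ?_, fun hSsolv => ?_⟩
  · have : Group.IsSolvable H := hH
    have : Group.IsSolvable AΦ := hAΦ
    have : Group.IsSolvable (normalizer (Φ.range : Set (OutGroup H))) := hN
    exact hS.isSolvable_of_isSolvable_normalizer hA
  · have : Group.IsSolvable S := hSsolv
    exact ⟨hS.isSolvable_left, hS.isSolvable_stabilizer hA, hS.isSolvable_centralizer⟩
end
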